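/- (Ergodic O(1/N) rate) Assume r·s > (1−α+α²)·λmax(AᵀA), where λmax(AᵀA) is the largest eigenvalue of AᵀA. Let u⁰ ∈ ℝⁿ × ℝᵐ and let {uᵏ}, {ũᵏ} be sequences such that for every k ≥ 0, ũᵏ is a prediction from uᵏ and u^{k+1} = uᵏ − M(uᵏ − ũᵏ). For an integer N ≥ 0 set ū_N = (1/(N+1)) Σ_{k=0}^{N} ũᵏ. Then ū_N ∈ Ω and for every u ∈ Ω, θ(ū_N) − θ(u) + (ū_N − u)ᵀF(u) ≤ ‖u − u⁰‖²_H / (2(N+1)). -/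

import Mathlib

open Matrix

noncomputable section

/-- A primal-dual pair `(x, y) ∈ ℝⁿ × ℝᵐ`. -/
abbrev PDVec (n m : ℕ) := (Fin n → ℝ) × (Fin m → ℝ)

/-- View a primal-dual pair as a single vector indexed by `Fin n ⊕ Fin m`. -/
def pdToVec {n m : ℕ} (u : PDVec n m) : Fin n ⊕ Fin m → ℝ := Sum.elim u.1 u.2

/-- `θ(u) = f(x) + g(y)`. -/
def pdTheta {n m : ℕ} (f : (Fin n → ℝ) → ℝ) (g : (Fin m → ℝ) → ℝ) (u : PDVec n m) : ℝ :=
  f u.1 + g u.2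

/-- `F(u) = (−Aᵀy, Ax)`. -/
def pdF {n m : ℕ} (A : Matrix (Fin m) (Fin n) ℝ) (u : PDVec n m) : PDVec n m :=
  (-(Aᵀ.mulVec u.2), A.mulVec u.1)

/-- `Q = [[r·Iₙ, Aᵀ], [α·A, s·Iₘ]]`. -/
def pdQ {n m : ℕ} (A : Matrix (Fin m) (Fin n) ℝ) (r s α : ℝ) :
    Matrix (Fin n ⊕ Fin m) (Fin n ⊕ Fin m) ℝ :=
  Matrix.fromBlocks (r • 1) Aᵀ (α • A) (s • 1)

/-- `M = [[Iₙ, 0], [−((1−α)/s)·A, Iₘ]]`. -/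
def pdM {n m : ℕ} (A : Matrix (Fin m) (Fin n) ℝ) (s α : ℝ) :
    Matrix (Fin n ⊕ Fin m) (Fin n ⊕ Fin m) ℝ :=
  Matrix.fromBlocks 1 0 (-(((1 - α) / s) • A)) 1

/-- `H = [[r·Iₙ + ((1−α)/s)·AᵀA, Aᵀ], [A, s·Iₘ]]`. -/
def pdH {n m : ℕ} (A : Matrix (Fin m) (Fin n) ℝ) (r s α : ℝ) :
    Matrix (Fin n ⊕ Fin m) (Fin n ⊕ Fin m) ℝ :=
  Matrix.fromBlocks (r • 1 + ((1 - α) / s) • (Aᵀ * A)) Aᵀ A (s • 1)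

/-- `G = [[r·Iₙ + (α(1−α)/s)·AᵀA, Aᵀ], [A, s·Iₘ]]`. -/
def pdG {n m : ℕ} (A : Matrix (Fin m) (Fin n) ℝ) (r s α : ℝ) :
    Matrix (Fin n ⊕ Fin m) (Fin n ⊕ Fin m) ℝ :=
  Matrix.fromBlocks (r • 1 + ((α * (1 - α)) / s) • (Aᵀ * A)) Aᵀ A (s • 1)

/-- `‖v‖²_S = vᵀ S v`. -/
def pdNormSq {k : Type*} [Fintype k] (S : Matrix k k ℝ) (v : k → ℝ) : ℝ :=
  v ⬝ᵥ S.mulVec v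

/-- `ut` is a prediction from `uk`: its first component minimizes
`x ↦ f(x) − (yᵏ)ᵀAx + (r/2)‖x − xᵏ‖²` over `X`, and its second component minimizes
`y ↦ g(y) + yᵀA(x̃ᵏ + α(x̃ᵏ − xᵏ)) + (s/2)‖y − yᵏ‖²` over `Y`. -/
def IsPrediction {n m : ℕ} (X : Set (Fin n → ℝ)) (Y : Set (Fin m → ℝ))
    (f : (Fin n → ℝ) → ℝ) (g : (Fin m → ℝ) → ℝ)
    (A : Matrix (Fin m) (Fin n) ℝ) (r s α : ℝ) (uk ut : PDVec n m) : Prop :=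
  ut.1 ∈ X ∧
  (∀ x ∈ X,
      f ut.1 - uk.2 ⬝ᵥ A.mulVec ut.1 + r / 2 * ((ut.1 - uk.1) ⬝ᵥ (ut.1 - uk.1)) ≤
        f x - uk.2 ⬝ᵥ A.mulVec x + r / 2 * ((x - uk.1) ⬝ᵥ (x - uk.1))) ∧
  ut.2 ∈ Y ∧
  (∀ y ∈ Y,
      g ut.2 + ut.2 ⬝ᵥ A.mulVec (ut.1 + α • (ut.1 - uk.1)) +
          s / 2 * ((ut.2 - uk.2) ⬝ᵥ (ut.2 - uk.2)) ≤
        g y + y ⬝ᵥ A.mulVec (ut.1 + α • (ut.1 - uk.1)) +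
          s / 2 * ((y - uk.2) ⬝ᵥ (y - uk.2)))

/-- The solution set `Ω*` of the variational inequality `VI(Ω, F, θ)`. -/
def VISol {n m : ℕ} (X : Set (Fin n → ℝ)) (Y : Set (Fin m → ℝ))
    (f : (Fin n → ℝ) → ℝ) (g : (Fin m → ℝ) → ℝ)
    (A : Matrix (Fin m) (Fin n) ℝ) : Set (PDVec n m) :=
  {u | u.1 ∈ X ∧ u.2 ∈ Y ∧
    ∀ v : PDVec n m, v.1 ∈ X → v.2 ∈ Y →
      pdTheta f g v - pdTheta f g u + (pdToVec v - pdToVec u) ⬝ᵥ pdToVec (pdF A u) ≥ 0}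

/-!
The prediction step is a pair of proximal minimizations, so its first-order optimality conditions
give the variational inequality
`θ(v) - θ(ũᵏ) + (v - ũᵏ)ᵀF(ũᵏ) ≥ (v - ũᵏ)ᵀQ(uᵏ - ũᵏ)` for every `v ∈ Ω`.
Since `F` is skew, `F(ũᵏ)` may be replaced by `F(v)`. Because `Q = HM`, `H` is symmetric and
`Qᵀ + Q - MᵀHM = G`, the correction step turns the right-hand side into
`(‖v - uᵏ⁺¹‖²_H - ‖v - uᵏ‖²_H + ‖uᵏ - ũᵏ‖²_G) / 2`. The bound `r s > (1 - α + α²) λmax(AᵀA)`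
makes `H` and `G` positive semidefinite, so the gap `θ(ũᵏ) - θ(v) + (ũᵏ - v)ᵀF(v)` is bounded
by a telescoping difference, and Jensen's inequality for the convex gap transfers the averaged
bound to `ū_N`.
-/

open Set Filter Topology

theorem nonneg_of_forall_mem_Ioo_nonneg_add_mul {a b : ℝ} (h : ∀ t ∈ Ioo (0 : ℝ) 1, 0 ≤ a + b * t) :
    0 ≤ a := by
  have hlim : Tendsto (fun t => a + b * t) (𝓝[>] 0) (𝓝 a) := by
    have : Tendsto (fun t : ℝ => a + b * t) (𝓝 0) (𝓝 (a + b * 0)) :=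
      (continuous_const.add (continuous_const.mul continuous_id)).tendsto 0
    simpa using this.mono_left nhdsWithin_le_nhds
  exact ge_of_tendsto hlim (eventually_of_mem (Ioo_mem_nhdsGT one_pos) h)

theorem ConvexOn.mul_dotProduct_le_of_forall_le {ι : Type*} [Fintype ι] {X : Set (ι → ℝ)}
    {φ : (ι → ℝ) → ℝ} (hφ : ConvexOn ℝ X φ) (lin w : ι → ℝ) (ρ : ℝ) {z : ι → ℝ} (hz : z ∈ X)
    (hmin : ∀ x ∈ X, φ z + lin ⬝ᵥ z + ρ / 2 * ((z - w) ⬝ᵥ (z - w)) ≤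
      φ x + lin ⬝ᵥ x + ρ / 2 * ((x - w) ⬝ᵥ (x - w)))
    {x : ι → ℝ} (hx : x ∈ X) :
    ρ * ((x - z) ⬝ᵥ (w - z)) ≤ φ x - φ z + lin ⬝ᵥ (x - z) := by
  suffices 0 ≤ φ x - φ z + lin ⬝ᵥ (x - z) - ρ * ((x - z) ⬝ᵥ (w - z)) by linarith
  refine nonneg_of_forall_mem_Ioo_nonneg_add_mul (b := ρ / 2 * ((x - z) ⬝ᵥ (x - z))) ?_
  rintro t ⟨ht0, ht1⟩
  have hcomb : (1 - t) • z + t • x = z + t • (x - z) := by module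
  have hmin_t := hmin _ (hcomb ▸ hφ.1 hz hx (by linarith) ht0.le (by ring))
  have hjensen : φ (z + t • (x - z)) ≤ (1 - t) * φ z + t * φ x :=
    hcomb ▸ hφ.2 hz hx (by linarith) ht0.le (by ring)
  rw [show z + t • (x - z) - w = (z - w) + t • (x - z) by abel] at hmin_t
  rw [show w - z = -(z - w) by abel]
  simp only [dotProduct_add, add_dotProduct, dotProduct_smul, smul_dotProduct, smul_eq_mul,
    dotProduct_neg] at hmin_t ⊢
  rw [dotProduct_comm (z - w) (x - z)] at hmin_t
  nlinarith

theorem dotProduct_mulVec_le_iSup_eigenvalues {ι : Type*} [Fintype ι] [DecidableEq ι]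
    {S : Matrix ι ι ℝ} (hS : S.IsHermitian) (x : ι → ℝ) :
    x ⬝ᵥ S *ᵥ x ≤ (⨆ i, hS.eigenvalues i) * (x ⬝ᵥ x) := by
  set U : Matrix ι ι ℝ := (hS.eigenvectorUnitary : Matrix ι ι ℝ)
  have hsU : star U = Uᵀ := by ext i j; simp [Matrix.star_apply]
  have hUU : U * Uᵀ = 1 := by
    rw [← hsU]; exact Matrix.mem_unitaryGroup_iff.mp hS.eigenvectorUnitary.2
  set y : ι → ℝ := Uᵀ *ᵥ x with hy
  have hxy : x ⬝ᵥ x = y ⬝ᵥ y := by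
    rw [hy, dotProduct_mulVec, vecMul_transpose, mulVec_mulVec, hUU, one_mulVec]
  have hquad : x ⬝ᵥ S *ᵥ x = ∑ i, hS.eigenvalues i * (y i * y i) := by
    conv_lhs => rw [hS.spectral_theorem, Unitary.conjStarAlgAut_apply, hsU]
    rw [← mulVec_mulVec, ← mulVec_mulVec, dotProduct_mulVec, ← mulVec_transpose, ← hy]
    simp [dotProduct, mulVec_diagonal, mul_left_comm]
  rw [hquad, hxy, dotProduct, Finset.mul_sum]
  exact Finset.sum_le_sum fun i _ => mul_le_mul_of_nonneg_right
    (le_ciSup (Set.finite_range _).bddAbove i) (mul_self_nonneg _)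

theorem two_mul_dotProduct_mulVec_eq_pdNormSq {ι : Type*} [Fintype ι] {H Q M G : Matrix ι ι ℝ}
    (hH : Hᵀ = H) (hHM : H * M = Q) (hG : Qᵀ + Q = G + Mᵀ * Q) (v uk ut : ι → ℝ) :
    2 * ((v - ut) ⬝ᵥ Q *ᵥ (uk - ut)) =
      pdNormSq H (v - (uk - M *ᵥ (uk - ut))) - pdNormSq H (v - uk) + pdNormSq G (uk - ut) := by
  have hHsymm : ∀ x y, x ⬝ᵥ H *ᵥ y = y ⬝ᵥ H *ᵥ x := fun x y => by
    rw [dotProduct_mulVec, ← mulVec_transpose, hH, dotProduct_comm]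
  have hQsymm : ∀ x, x ⬝ᵥ Qᵀ *ᵥ x = x ⬝ᵥ Q *ᵥ x := fun x => by
    rw [dotProduct_mulVec, ← mulVec_transpose, transpose_transpose, dotProduct_comm]
  have hMQ : ∀ x, (M *ᵥ x) ⬝ᵥ H *ᵥ (M *ᵥ x) = x ⬝ᵥ (Mᵀ * Q) *ᵥ x := fun x => by
    rw [← hHM, ← mulVec_mulVec, ← mulVec_mulVec, dotProduct_mulVec x, vecMul_transpose]
  have hGQ : G = Qᵀ + Q - Mᵀ * Q := by rw [hG]; abel
  rw [show v - (uk - M *ᵥ (uk - ut)) = (v - ut) - (uk - ut) + M *ᵥ (uk - ut) by abel,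
    show v - uk = (v - ut) - (uk - ut) by abel]
  generalize v - ut = a, uk - ut = b
  simp only [pdNormSq, hGQ, add_mulVec, sub_mulVec, mulVec_add, mulVec_sub, dotProduct_add,
    add_dotProduct, dotProduct_sub, sub_dotProduct, hMQ, hQsymm]
  rw [hHsymm (M *ᵥ b) a, hHsymm (M *ᵥ b) b, mulVec_mulVec, hHM]
  ring

theorem sum_range_inv_natCast_add_one (N : ℕ) :
    ∑ _k ∈ Finset.range (N + 1), ((N : ℝ) + 1)⁻¹ = 1 := by
  rw [Finset.sum_const, Finset.card_range, nsmul_eq_mul]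
  push_cast
  exact mul_inv_cancel₀ (by positivity)

theorem Convex.inv_smul_sum_range_mem {E : Type*} [AddCommGroup E] [Module ℝ E] {Ω : Set E}
    (hΩ : Convex ℝ Ω) {z : ℕ → E} (hz : ∀ k, z k ∈ Ω) (N : ℕ) :
    ((N : ℝ) + 1)⁻¹ • ∑ k ∈ Finset.range (N + 1), z k ∈ Ω := by
  rw [Finset.smul_sum]
  exact hΩ.sum_mem (fun _ _ => by positivity) (sum_range_inv_natCast_add_one N) fun k _ => hz k

theorem ConvexOn.map_inv_smul_sum_range_le {E : Type*} [AddCommGroup E] [Module ℝ E] {Ω : Set E}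
    {Φ : E → ℝ} (hΦ : ConvexOn ℝ Ω Φ) {z : ℕ → E} (hz : ∀ k, z k ∈ Ω) {D : ℕ → ℝ}
    (hstep : ∀ k, Φ (z k) ≤ (D k - D (k + 1)) / 2) (N : ℕ) (hD : 0 ≤ D (N + 1)) :
    Φ (((N : ℝ) + 1)⁻¹ • ∑ k ∈ Finset.range (N + 1), z k) ≤ D 0 / (2 * ((N : ℝ) + 1)) := by
  set w : ℝ := ((N : ℝ) + 1)⁻¹
  rw [Finset.smul_sum]
  calc Φ (∑ k ∈ Finset.range (N + 1), w • z k) ≤ ∑ k ∈ Finset.range (N + 1), w • Φ (z k) :=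
        hΦ.map_sum_le (fun _ _ => by positivity) (sum_range_inv_natCast_add_one N) fun k _ => hz k
    _ ≤ ∑ k ∈ Finset.range (N + 1), w • ((D k - D (k + 1)) / 2) := by
        gcongr with k
        exact hstep k
    _ = w * ((D 0 - D (N + 1)) / 2) := by
        simp only [smul_eq_mul]
        rw [← Finset.mul_sum, ← Finset.sum_div, Finset.sum_range_sub']
    _ ≤ D 0 / (2 * ((N : ℝ) + 1)) := by
        rw [inv_mul_eq_div, div_div, mul_comm]
        gcongr
        linarith

section PrimalDual

variable {n m : ℕ}

theorem pdToVec_sub (u v : PDVec n m) :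
    pdToVec u - pdToVec v = Sum.elim (u.1 - v.1) (u.2 - v.2) := by
  ext (_ | _) <;> rfl

theorem pdToVec_smul_add_smul (a b : ℝ) (x y : PDVec n m) :
    pdToVec (a • x + b • y) = a • pdToVec x + b • pdToVec y := by
  ext (_ | _) <;> rfl

theorem pdToVec_pdF (A : Matrix (Fin m) (Fin n) ℝ) (u : PDVec n m) :
    pdToVec (pdF A u) = Sum.elim (-(Aᵀ *ᵥ u.2)) (A *ᵥ u.1) := rfl

theorem pdH_transpose (A : Matrix (Fin m) (Fin n) ℝ) (r s α : ℝ) :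
    (pdH A r s α)ᵀ = pdH A r s α := by
  simp [pdH, fromBlocks_transpose, transpose_add, transpose_smul, transpose_mul]

theorem pdH_mul_pdM (A : Matrix (Fin m) (Fin n) ℝ) (r : ℝ) {s : ℝ} (hs : s ≠ 0) (α : ℝ) :
    pdH A r s α * pdM A s α = pdQ A r s α := by
  rw [pdH, pdM, pdQ, fromBlocks_multiply]
  congr 1 <;> ext i j <;> simp [Matrix.add_apply, Matrix.mul_apply]
  field_simp
  ring

theorem pdQ_transpose_add (A : Matrix (Fin m) (Fin n) ℝ) (r : ℝ) {s : ℝ} (hs : s ≠ 0) (α : ℝ) :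
    (pdQ A r s α)ᵀ + pdQ A r s α = pdG A r s α + (pdM A s α)ᵀ * pdQ A r s α := by
  rw [pdQ, pdG, pdM, fromBlocks_transpose, fromBlocks_transpose, fromBlocks_add,
    fromBlocks_multiply, fromBlocks_add]
  congr 1 <;> ext i j <;> simp [Matrix.add_apply, Matrix.mul_apply] <;> field_simp <;> ring

theorem pdNormSq_fromBlocks_nonneg (A : Matrix (Fin m) (Fin n) ℝ) {r s c : ℝ} (hs : 0 < s)
    (hA : ∀ p, (1 - c * s) * (A *ᵥ p ⬝ᵥ A *ᵥ p) ≤ r * s * (p ⬝ᵥ p)) (w : Fin n ⊕ Fin m → ℝ) :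
    0 ≤ pdNormSq (fromBlocks (r • 1 + c • (Aᵀ * A)) Aᵀ A (s • 1)) w := by
  obtain ⟨p, q, rfl⟩ : ∃ p q, w = Sum.elim p q := ⟨_, _, (Sum.elim_comp_inl_inr w).symm⟩
  rw [pdNormSq, fromBlocks_mulVec, Sum.elim_comp_inl, Sum.elim_comp_inr,
    sumElim_dotProduct_sumElim]
  -- `s` times the form is `‖A p + s q‖² + (r s ‖p‖² - (1 - c s) ‖A p‖²)`
  have hsq : 0 ≤ (A *ᵥ p + s • q) ⬝ᵥ (A *ᵥ p + s • q) := by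
    simpa using dotProduct_star_self_nonneg (A *ᵥ p + s • q)
  have hp := hA p
  simp only [add_mulVec, smul_mulVec, one_mulVec, ← mulVec_mulVec, dotProduct_add,
    add_dotProduct, dotProduct_smul, smul_dotProduct, smul_eq_mul] at hsq ⊢
  have htr : ∀ y, p ⬝ᵥ Aᵀ *ᵥ y = A *ᵥ p ⬝ᵥ y := fun y => by
    rw [dotProduct_mulVec, vecMul_transpose]
  rw [htr, htr]
  rw [dotProduct_comm q (A *ᵥ p)] at hsq ⊢
  nlinarith

theorem mul_mulVec_dotProduct_mulVec_le {A : Matrix (Fin m) (Fin n) ℝ} (hA : (Aᵀ * A).IsHermitian)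
    {κ r s : ℝ} (hκ : 0 ≤ κ) (hrs : κ * (⨆ i, hA.eigenvalues i) < r * s) (p : Fin n → ℝ) :
    κ * (A *ᵥ p ⬝ᵥ A *ᵥ p) ≤ r * s * (p ⬝ᵥ p) := by
  have hray := dotProduct_mulVec_le_iSup_eigenvalues hA p
  rw [← mulVec_mulVec, dotProduct_mulVec p Aᵀ, vecMul_transpose] at hray
  calc κ * (A *ᵥ p ⬝ᵥ A *ᵥ p) ≤ κ * (⨆ i, hA.eigenvalues i) * (p ⬝ᵥ p) := by
        rw [mul_assoc]; exact mul_le_mul_of_nonneg_left hray hκ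
    _ ≤ r * s * (p ⬝ᵥ p) :=
        mul_le_mul_of_nonneg_right hrs.le (by simpa using dotProduct_star_self_nonneg p)

theorem pdNormSq_pdH_nonneg (A : Matrix (Fin m) (Fin n) ℝ) {r s α : ℝ} (hs : 0 < s)
    (hA : ∀ p, (1 - α + α ^ 2) * (A *ᵥ p ⬝ᵥ A *ᵥ p) ≤ r * s * (p ⬝ᵥ p))
    (w : Fin n ⊕ Fin m → ℝ) : 0 ≤ pdNormSq (pdH A r s α) w := by
  refine pdNormSq_fromBlocks_nonneg A hs (fun p => ?_) w
  have hAp : 0 ≤ A *ᵥ p ⬝ᵥ A *ᵥ p := by simpa using dotProduct_star_self_nonneg (A *ᵥ p)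
  rw [div_mul_cancel₀ _ hs.ne', sub_sub_cancel]
  nlinarith [hA p, mul_nonneg (sq_nonneg (1 - α)) hAp]

theorem pdNormSq_pdG_nonneg (A : Matrix (Fin m) (Fin n) ℝ) {r s α : ℝ} (hs : 0 < s)
    (hA : ∀ p, (1 - α + α ^ 2) * (A *ᵥ p ⬝ᵥ A *ᵥ p) ≤ r * s * (p ⬝ᵥ p))
    (w : Fin n ⊕ Fin m → ℝ) : 0 ≤ pdNormSq (pdG A r s α) w := by
  refine pdNormSq_fromBlocks_nonneg A hs (fun p => ?_) w
  rw [div_mul_cancel₀ _ hs.ne']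
  linarith [hA p]

theorem pdToVec_sub_dotProduct_pdF_eq (A : Matrix (Fin m) (Fin n) ℝ) (v w : PDVec n m) :
    (pdToVec v - pdToVec w) ⬝ᵥ pdToVec (pdF A v) =
      (pdToVec v - pdToVec w) ⬝ᵥ pdToVec (pdF A w) := by
  simp only [pdToVec_sub, pdToVec_pdF, sumElim_dotProduct_sumElim, dotProduct_neg,
    dotProduct_mulVec _ Aᵀ, vecMul_transpose, sub_dotProduct, mulVec_sub]
  rw [dotProduct_comm v.2, dotProduct_comm w.2, dotProduct_comm v.2, dotProduct_comm w.2]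
  ring

def pdGap (f : (Fin n → ℝ) → ℝ) (g : (Fin m → ℝ) → ℝ) (A : Matrix (Fin m) (Fin n) ℝ)
    (v w : PDVec n m) : ℝ :=
  pdTheta f g w - pdTheta f g v + (pdToVec w - pdToVec v) ⬝ᵥ pdToVec (pdF A v)

theorem convexOn_pdGap {X : Set (Fin n → ℝ)} {Y : Set (Fin m → ℝ)} {f : (Fin n → ℝ) → ℝ}
    {g : (Fin m → ℝ) → ℝ} (hf : ConvexOn ℝ X f) (hg : ConvexOn ℝ Y g)
    (A : Matrix (Fin m) (Fin n) ℝ) (v : PDVec n m) : ConvexOn ℝ (X ×ˢ Y) (pdGap f g A v) := by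
  refine ⟨hf.1.prod hg.1, fun x hx y hy a b ha hb hab => ?_⟩
  have hfx := hf.2 hx.1 hy.1 ha hb hab
  have hgy := hg.2 hx.2 hy.2 ha hb hab
  have hv : a • pdToVec x + b • pdToVec y - pdToVec v =
      a • (pdToVec x - pdToVec v) + b • (pdToVec y - pdToVec v) := by
    conv_lhs => rw [← one_smul ℝ (pdToVec v), ← hab, add_smul]
    module
  simp only [pdGap, pdTheta, pdToVec_smul_add_smul, hv, Prod.fst_add, Prod.snd_add,
    Prod.smul_fst, Prod.smul_snd, add_dotProduct, smul_dotProduct, smul_eq_mul] at hfx hgy ⊢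
  have hθv : (a + b) * (f v.1 + g v.2) = f v.1 + g v.2 := by rw [hab, one_mul]
  linarith

variable {X : Set (Fin n → ℝ)} {Y : Set (Fin m → ℝ)} {f : (Fin n → ℝ) → ℝ}
  {g : (Fin m → ℝ) → ℝ} {A : Matrix (Fin m) (Fin n) ℝ} {r s α : ℝ} {uk ut : PDVec n m}

theorem IsPrediction.dotProduct_pdQ_le (hp : IsPrediction X Y f g A r s α uk ut)
    (hf : ConvexOn ℝ X f) (hg : ConvexOn ℝ Y g) {v : PDVec n m} (hvX : v.1 ∈ X) (hvY : v.2 ∈ Y) :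
    (pdToVec v - pdToVec ut) ⬝ᵥ pdQ A r s α *ᵥ (pdToVec uk - pdToVec ut) ≤
      pdTheta f g v - pdTheta f g ut + (pdToVec v - pdToVec ut) ⬝ᵥ pdToVec (pdF A ut) := by
  obtain ⟨hutX, hminX, hutY, hminY⟩ := hp
  have htr : ∀ x y, x ⬝ᵥ Aᵀ *ᵥ y = y ⬝ᵥ A *ᵥ x := fun x y => by
    rw [dotProduct_mulVec, vecMul_transpose, dotProduct_comm]
  have htr' : ∀ x y, Aᵀ *ᵥ y ⬝ᵥ x = y ⬝ᵥ A *ᵥ x := fun x y => by rw [dotProduct_comm, htr]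
  have hcomm : ∀ x y, A *ᵥ x ⬝ᵥ y = y ⬝ᵥ A *ᵥ x := fun x y => dotProduct_comm _ _
  have hfocX := hf.mul_dotProduct_le_of_forall_le (-(Aᵀ *ᵥ uk.2)) uk.1 r hutX
    (fun x hx => by simpa only [neg_dotProduct, htr', ← sub_eq_add_neg] using hminX x hx) hvX
  have hfocY := hg.mul_dotProduct_le_of_forall_le (A *ᵥ (ut.1 + α • (ut.1 - uk.1))) uk.2 s hutY
    (fun y hy => by simpa only [hcomm] using hminY y hy) hvY
  simp only [pdToVec_sub, pdToVec_pdF, pdQ, fromBlocks_mulVec, Sum.elim_comp_inl,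
    Sum.elim_comp_inr, sumElim_dotProduct_sumElim, pdTheta]
  simp only [smul_mulVec, one_mulVec, mulVec_add, mulVec_sub, mulVec_smul,
    dotProduct_add, dotProduct_sub, dotProduct_smul, dotProduct_neg, add_dotProduct,
    sub_dotProduct, neg_dotProduct, smul_dotProduct, smul_eq_mul, htr, htr', hcomm]
    at hfocX hfocY ⊢
  linarith

theorem IsPrediction.pdGap_le (hp : IsPrediction X Y f g A r s α uk ut)
    (hf : ConvexOn ℝ X f) (hg : ConvexOn ℝ Y g) (hs : s ≠ 0)
    (hG : ∀ w, 0 ≤ pdNormSq (pdG A r s α) w) {un : PDVec n m}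
    (hcorr : pdToVec un = pdToVec uk - pdM A s α *ᵥ (pdToVec uk - pdToVec ut))
    {v : PDVec n m} (hvX : v.1 ∈ X) (hvY : v.2 ∈ Y) :
    pdGap f g A v ut ≤
      (pdNormSq (pdH A r s α) (pdToVec v - pdToVec uk) -
        pdNormSq (pdH A r s α) (pdToVec v - pdToVec un)) / 2 := by
  have hvi := hp.dotProduct_pdQ_le hf hg hvX hvY
  have hid := two_mul_dotProduct_mulVec_eq_pdNormSq (pdH_transpose A r s α)
    (pdH_mul_pdM A r hs α) (pdQ_transpose_add A r hs α) (pdToVec v) (pdToVec uk) (pdToVec ut)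
  rw [← hcorr] at hid
  rw [← pdToVec_sub_dotProduct_pdF_eq A v ut] at hvi
  rw [pdGap, ← neg_sub (pdToVec v), neg_dotProduct]
  linarith [hG (pdToVec uk - pdToVec ut)]

end PrimalDual

theorem stmt_11_general (n m : ℕ)
    (X : Set (Fin n → ℝ)) (Y : Set (Fin m → ℝ))
    (hXcv : Convex ℝ X)
    (hYcv : Convex ℝ Y)
    (f : (Fin n → ℝ) → ℝ) (g : (Fin m → ℝ) → ℝ)
    (hf : ConvexOn ℝ Set.univ f) (hg : ConvexOn ℝ Set.univ g)
    (A : Matrix (Fin m) (Fin n) ℝ) (r s α : ℝ) (hs : 0 < s)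
    (hA : (Aᵀ * A).IsHermitian)
    (hrs : (1 - α + α ^ 2) * (⨆ i, hA.eigenvalues i) < r * s)
    (u ut : ℕ → PDVec n m)
    (hpred : ∀ k, IsPrediction X Y f g A r s α (u k) (ut k))
    (hcorr : ∀ k, pdToVec (u (k + 1)) =
      pdToVec (u k) - (pdM A s α).mulVec (pdToVec (u k) - pdToVec (ut k)))
    (N : ℕ) (ubar : PDVec n m)
    (hubar : ubar = (((N : ℝ) + 1)⁻¹) • ∑ k ∈ Finset.range (N + 1), ut k) :
    (ubar.1 ∈ X ∧ ubar.2 ∈ Y) ∧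
      ∀ v : PDVec n m, v.1 ∈ X → v.2 ∈ Y →
        pdTheta f g ubar - pdTheta f g v +
            (pdToVec ubar - pdToVec v) ⬝ᵥ pdToVec (pdF A v) ≤
          pdNormSq (pdH A r s α) (pdToVec v - pdToVec (u 0)) / (2 * ((N : ℝ) + 1)) := by
  have hbound := mul_mulVec_dotProduct_mulVec_le hA (by nlinarith [sq_nonneg (2 * α - 1)]) hrs
  have hfX : ConvexOn ℝ X f := hf.subset (subset_univ X) hXcv
  have hgY : ConvexOn ℝ Y g := hg.subset (subset_univ Y) hYcv
  have hmem : ∀ k, ut k ∈ X ×ˢ Y := fun k => ⟨(hpred k).1, (hpred k).2.2.1⟩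
  subst hubar
  refine ⟨(hXcv.prod hYcv).inv_smul_sum_range_mem hmem N, fun v hvX hvY => ?_⟩
  exact (convexOn_pdGap hfX hgY A v).map_inv_smul_sum_range_le hmem
    (fun k => (hpred k).pdGap_le hfX hgY hs.ne' (pdNormSq_pdG_nonneg A hs hbound) (hcorr k) hvX hvY)
    N (pdNormSq_pdH_nonneg A hs hbound _)

/-- Ergodic O(1/N) convergence rate. -/
theorem stmt_11 (n m : ℕ) (hn : 0 < n) (hm : 0 < m)
    (X : Set (Fin n → ℝ)) (Y : Set (Fin m → ℝ))
    (hXne : X.Nonempty) (hXcl : IsClosed X) (hXcv : Convex ℝ X)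
    (hYne : Y.Nonempty) (hYcl : IsClosed Y) (hYcv : Convex ℝ Y)
    (f : (Fin n → ℝ) → ℝ) (g : (Fin m → ℝ) → ℝ)
    (hf : ConvexOn ℝ Set.univ f) (hg : ConvexOn ℝ Set.univ g)
    (A : Matrix (Fin m) (Fin n) ℝ) (r s α : ℝ) (hr : 0 < r) (hs : 0 < s)
    (hA : (Aᵀ * A).IsHermitian)
    (hrs : (1 - α + α ^ 2) * (⨆ i, hA.eigenvalues i) < r * s)
    (u ut : ℕ → PDVec n m)
    (hpred : ∀ k, IsPrediction X Y f g A r s α (u k) (ut k))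
    (hcorr : ∀ k, pdToVec (u (k + 1)) =
      pdToVec (u k) - (pdM A s α).mulVec (pdToVec (u k) - pdToVec (ut k)))
    (N : ℕ) (ubar : PDVec n m)
    (hubar : ubar = (((N : ℝ) + 1)⁻¹) • ∑ k ∈ Finset.range (N + 1), ut k) :
    (ubar.1 ∈ X ∧ ubar.2 ∈ Y) ∧
      ∀ v : PDVec n m, v.1 ∈ X → v.2 ∈ Y →
        pdTheta f g ubar - pdTheta f g v +
            (pdToVec ubar - pdToVec v) ⬝ᵥ pdToVec (pdF A v) ≤
          pdNormSq (pdH A r s α) (pdToVec v - pdToVec (u 0)) / (2 * ((N : ℝ) + 1)) :=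
  stmt_11_general n m X Y hXcv hYcv f g hf hg A r s α hs hA hrs u ut hpred hcorr N ubar hubar
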